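/- arXiv:1710.05892 — 2 statements merged into one kernel-verified Lean document; each statement's English description precedes it below -/
import Mathlib

section
/- Let P ∈ Q be a quantum behaviour in the (2,2,2,2) Bell scenario with ⟨A₀B₀⟩ = ⟨A₀B₁⟩ = 1. Then ⟨A₁B₀⟩ = ⟨A₁B₁⟩ and P is local, i.e. P ∈ L. Consequently, for the Bell function B₅·P := ⟨A₀B₀⟩ + ⟨A₀B₁⟩ one has β_L(B₅) = β_Q(B₅) = β_NS(B₅) = 2 and F_L(B₅) = F_Q(B₅) ⊊ F_NS(B₅), the strict inclusion being witnessed by the PR box (the no-signalling behaviour with zero marginals and ⟨A_xB_y⟩ = (−1)^{xy}), which saturates the bound but does not belong to Q. -/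
open Matrix Kronecker ComplexOrder BigOperators

/-- A behaviour in the (2,2,2,2) Bell scenario: `P a b x y = P(ab|xy)`. -/
abbrev Behaviour : Type := Fin 2 → Fin 2 → Fin 2 → Fin 2 → ℝ

/-- `P` admits a quantum realisation of local dimension `d`. -/
def HasRealisation (d : ℕ) (P : Behaviour) : Prop :=
  ∃ (ρ : Matrix (Fin d × Fin d) (Fin d × Fin d) ℂ)
    (E F : Fin 2 → Fin 2 → Matrix (Fin d) (Fin d) ℂ),
    ρ.PosSemidef ∧ ρ.trace = 1 ∧
    (∀ x a, (E x a).PosSemidef) ∧ (∀ y b, (F y b).PosSemidef) ∧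
    (∀ x, ∑ a, E x a = 1) ∧ (∀ y, ∑ b, F y b = 1) ∧
    ∀ a b x y, (P a b x y : ℂ) = ((E x a ⊗ₖ F y b) * ρ).trace

def Qfinite : Set Behaviour := {P | ∃ d : ℕ, 0 < d ∧ HasRealisation d P}

def Q : Set Behaviour := closure Qfinite

def detBehaviour (f g : Fin 2 → Fin 2) : Behaviour :=
  fun a b x y => if a = f x ∧ b = g y then 1 else 0

def L : Set Behaviour := convexHull ℝ {P | ∃ f g, P = detBehaviour f g}

def NS : Set Behaviour :=
  {P | (∀ a b x y, 0 ≤ P a b x y) ∧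
       (∀ x y : Fin 2, ∑ a : Fin 2, ∑ b : Fin 2, P a b x y = 1) ∧
       (∀ (a x y y' : Fin 2), ∑ b : Fin 2, P a b x y = ∑ b : Fin 2, P a b x y') ∧
       (∀ (b x x' y : Fin 2), ∑ a : Fin 2, P a b x y = ∑ a : Fin 2, P a b x' y)}

def margA (P : Behaviour) (x : Fin 2) : ℝ :=
  ∑ a : Fin 2, ∑ b : Fin 2, (-1 : ℝ) ^ (a : ℕ) * P a b x 0

def margB (P : Behaviour) (y : Fin 2) : ℝ :=
  ∑ a : Fin 2, ∑ b : Fin 2, (-1 : ℝ) ^ (b : ℕ) * P a b 0 y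

def corr (P : Behaviour) (x y : Fin 2) : ℝ :=
  ∑ a : Fin 2, ∑ b : Fin 2, (-1 : ℝ) ^ ((a : ℕ) + (b : ℕ)) * P a b x y

def chsh (P : Behaviour) : ℝ := corr P 0 0 + corr P 0 1 + corr P 1 0 - corr P 1 1

def bell (B P : Behaviour) : ℝ := ∑ a : Fin 2, ∑ b : Fin 2, ∑ x : Fin 2, ∑ y : Fin 2, B a b x y * P a b x y

noncomputable def beta (B : Behaviour) (S : Set Behaviour) : ℝ := sSup (bell B '' S)

def face (B : Behaviour) (S : Set Behaviour) : Set Behaviour :=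
  {P ∈ S | bell B P = beta B S}

/-- Reconstruct a behaviour from marginals and correlators. -/
noncomputable def fromCorr (mA mB : Fin 2 → ℝ) (c : Fin 2 → Fin 2 → ℝ) : Behaviour :=
  fun a b x y =>
    (1 + (-1 : ℝ) ^ (a : ℕ) * mA x + (-1 : ℝ) ^ (b : ℕ) * mB y
      + (-1 : ℝ) ^ ((a : ℕ) + (b : ℕ)) * c x y) / 4


/-- The Bell functional `B₅`. -/
def B5val (P : Behaviour) : ℝ := corr P 0 0 + corr P 0 1

/-- The PR box: zero marginals and correlators `(−1)^{xy}`. -/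
noncomputable def PR : Behaviour :=
  fromCorr (fun _ => 0) (fun _ => 0) (fun x y => (-1 : ℝ) ^ ((x : ℕ) * (y : ℕ)))

/-!
If `P` is quantum and `B₅ · P = ⟨A₀B₀⟩ + ⟨A₀B₁⟩` is close to its maximum `2`, then Bob's two
observables act almost identically on the state: writing `ψ` for the state and `A₀`, `B_y` for
the ±1-valued observables, `A₀ψ` is within `√(2(1 - ⟨A₀B_y⟩))` of `B_yψ`, so
`(P(ab|x1) - P(ab|x0))² ≤ 2 - B₅ · P`. This inequality is closed, hence holds on all of `Q`,
and at `B₅ · P = 2` it makes `P` independent of Bob's input. A no-signalling behaviour in which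
Bob has effectively one input and Alice's first output copies Bob's is local. The PR box
attains `B₅ = 2` but depends on Bob's input, so it is not quantum.
-/

open scoped MatrixOrder InnerProductSpace

theorem Matrix.sub_kronecker {l m n p α : Type*} [Ring α] (A₁ A₂ : Matrix l m α)
    (B : Matrix n p α) : (A₁ - A₂) ⊗ₖ B = A₁ ⊗ₖ B - A₂ ⊗ₖ B := by
  ext; simp [sub_mul]

theorem Matrix.kronecker_sub {l m n p α : Type*} [Ring α] (A : Matrix l m α)
    (B₁ B₂ : Matrix n p α) : A ⊗ₖ (B₁ - B₂) = A ⊗ₖ B₁ - A ⊗ₖ B₂ := by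
  ext; simp [mul_sub]

section Contraction

variable {n : Type*} [Fintype n] [DecidableEq n] {G H : Matrix n n ℂ}

theorem Matrix.PosSemidef.trace_mul_nonneg {A ρ : Matrix n n ℂ} (hA : A.PosSemidef)
    (hρ : ρ.PosSemidef) : 0 ≤ (A * ρ).trace := by
  obtain ⟨B, rfl⟩ := CStarAlgebra.nonneg_iff_eq_star_mul_self.mp hA.nonneg
  have h := (hρ.mul_mul_conjTranspose_same B).trace_nonneg
  rwa [Matrix.trace_mul_cycle, ← Matrix.star_eq_conjTranspose] at h

theorem Matrix.PosSemidef.re_trace_conjTranspose_mul_self_mul_le {X ρ : Matrix n n ℂ}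
    (hX : (1 - Xᴴ * X).PosSemidef) (hρ : ρ.PosSemidef) : (Xᴴ * X * ρ).trace.re ≤ ρ.trace.re := by
  have h := (Complex.nonneg_iff.mp (hX.trace_mul_nonneg hρ)).1
  rw [Matrix.sub_mul, Matrix.one_mul, Matrix.trace_sub, Complex.sub_re] at h
  linarith

/-- Uses `w := √G`: then `1 - (G - H)² = 4 w H w`. -/
theorem Matrix.PosSemidef.one_sub_conjTranspose_mul_self_sub (hG : G.PosSemidef)
    (hH : H.PosSemidef) (hGH : G + H = 1) : (1 - (G - H)ᴴ * (G - H)).PosSemidef := by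
  obtain ⟨w, hw, rfl⟩ : ∃ w : Matrix n n ℂ, wᴴ = w ∧ w * w = G :=
    ⟨CFC.sqrt G, (CFC.sqrt_nonneg G).posSemidef.isHermitian.eq, CFC.sqrt_mul_sqrt_self G hG.nonneg⟩
  obtain rfl : H = 1 - w * w := by rw [← hGH]; abel
  have h : 1 - (w * w - (1 - w * w))ᴴ * (w * w - (1 - w * w))
      = (4 : ℕ) • (wᴴ * (1 - w * w) * w) := by
    rw [(hG.1.sub hH.1).eq, hw]; noncomm_ring
  rw [h]
  exact (hH.conjTranspose_mul_mul_same w).smul (by norm_num)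

theorem Matrix.PosSemidef.one_sub_conjTranspose_mul_self (hG : G.PosSemidef)
    (hG1 : (1 - G).PosSemidef) : (1 - Gᴴ * G).PosSemidef := by
  obtain ⟨w, hw, rfl⟩ : ∃ w : Matrix n n ℂ, wᴴ = w ∧ w * w = G :=
    ⟨CFC.sqrt G, (CFC.sqrt_nonneg G).posSemidef.isHermitian.eq, CFC.sqrt_mul_sqrt_self G hG.nonneg⟩
  have h : 1 - (w * w)ᴴ * (w * w) = (1 - w * w) + wᴴ * (1 - w * w) * w := by
    rw [hG.1.eq, hw]; noncomm_ring
  rw [h]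
  exact hG1.add (hG1.conjTranspose_mul_mul_same w)

end Contraction

theorem norm_inner_sub_sq_le {𝕜 V : Type*} [RCLike 𝕜] [SeminormedAddCommGroup V]
    [InnerProductSpace 𝕜 V] {e u v₀ v₁ : V} (he : ‖e‖ ≤ 1) (hu : ‖u‖ ≤ 1) (hv₀ : ‖v₀‖ ≤ 1)
    (hv₁ : ‖v₁‖ ≤ 1) :
    ‖⟪e, v₁ - v₀⟫_𝕜‖ ^ 2 ≤ 4 * (2 - RCLike.re ⟪u, v₀⟫_𝕜 - RCLike.re ⟪u, v₁⟫_𝕜) := by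
  have hdist : ∀ v, ‖v‖ ≤ 1 → ‖u - v‖ ^ 2 ≤ 2 * (1 - RCLike.re ⟪u, v⟫_𝕜) := fun v hv => by
    rw [@norm_sub_sq 𝕜]
    nlinarith [norm_nonneg u, norm_nonneg v]
  have htri : ‖v₁ - v₀‖ ≤ ‖u - v₀‖ + ‖u - v₁‖ := by
    simpa using norm_sub_le (u - v₀) (u - v₁)
  have hcs : ‖⟪e, v₁ - v₀⟫_𝕜‖ ≤ ‖v₁ - v₀‖ :=
    (norm_inner_le_norm e _).trans (mul_le_of_le_one_left (norm_nonneg _) he)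
  have hsq : ‖⟪e, v₁ - v₀⟫_𝕜‖ ^ 2 ≤ (‖u - v₀‖ + ‖u - v₁‖) ^ 2 :=
    pow_le_pow_left₀ (norm_nonneg _) (hcs.trans htri) 2
  nlinarith [hdist v₀ hv₀, hdist v₁ hv₁, sq_nonneg (‖u - v₀‖ - ‖u - v₁‖)]

section Realisation

variable {m n : Type*} [Fintype m] [Fintype n] {ρ : Matrix (m × n) (m × n) ℂ}
  {E : Fin 2 → Fin 2 → Matrix m m ℂ} {F : Fin 2 → Fin 2 → Matrix n n ℂ} {P : Behaviour}

theorem corr_eq_trace (hP : ∀ a b x y, (P a b x y : ℂ) = ((E x a ⊗ₖ F y b) * ρ).trace)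
    (x y : Fin 2) : (corr P x y : ℂ) = (((E x 0 - E x 1) ⊗ₖ (F y 0 - F y 1)) * ρ).trace := by
  have h : corr P x y = P 0 0 x y - P 0 1 x y - P 1 0 x y + P 1 1 x y := by
    simp [corr, Fin.sum_univ_two]; ring
  rw [h]
  push_cast [hP]
  simp only [sub_kronecker, kronecker_sub, sub_mul, trace_sub]
  ring

variable [DecidableEq n]

theorem sum_right_eq_trace (hF : ∀ y, F y 0 + F y 1 = 1)
    (hP : ∀ a b x y, (P a b x y : ℂ) = ((E x a ⊗ₖ F y b) * ρ).trace) (a x y : Fin 2) :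
    ((∑ b, P a b x y : ℝ) : ℂ) = ((E x a ⊗ₖ 1) * ρ).trace := by
  rw [Fin.sum_univ_two, Complex.ofReal_add, hP, hP, ← trace_add, ← add_mul, ← kronecker_add, hF]

theorem two_mul_sub_eq_trace (hF1 : ∀ y, F y 0 + F y 1 = 1)
    (hP : ∀ a b x y, (P a b x y : ℂ) = ((E x a ⊗ₖ F y b) * ρ).trace) (a b x : Fin 2) :
    2 * ((P a b x 1 - P a b x 0 : ℝ) : ℂ)
      = (-1) ^ (b : ℕ) * ((E x a ⊗ₖ ((F 1 0 - F 1 1) - (F 0 0 - F 0 1))) * ρ).trace := by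
  have hF1' : ∀ y, F y 1 = 1 - F y 0 := fun y => by rw [← hF1 y]; abel
  push_cast [hP]
  fin_cases b <;> simp [hF1', kronecker_sub, sub_mul, trace_sub] <;> ring

variable [DecidableEq m]

theorem sum_left_eq_trace (hE : ∀ x, E x 0 + E x 1 = 1)
    (hP : ∀ a b x y, (P a b x y : ℂ) = ((E x a ⊗ₖ F y b) * ρ).trace) (b x y : Fin 2) :
    ((∑ a, P a b x y : ℝ) : ℂ) = ((1 ⊗ₖ F y b) * ρ).trace := by
  rw [Fin.sum_univ_two, Complex.ofReal_add, hP, hP, ← trace_add, ← add_mul, ← add_kronecker, hE]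

theorem mem_NS_of_realisation (hρ : ρ.PosSemidef) (htr : ρ.trace = 1)
    (hE : ∀ x a, (E x a).PosSemidef) (hF : ∀ y b, (F y b).PosSemidef)
    (hE1 : ∀ x, E x 0 + E x 1 = 1) (hF1 : ∀ y, F y 0 + F y 1 = 1)
    (hP : ∀ a b x y, (P a b x y : ℂ) = ((E x a ⊗ₖ F y b) * ρ).trace) : P ∈ NS := by
  refine ⟨fun a b x y => ?_, fun x y => ?_, fun a x y y' => ?_, fun b x x' y => ?_⟩
  · have h := ((hE x a).kronecker (hF y b)).trace_mul_nonneg hρ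
    rw [← hP] at h
    exact_mod_cast h
  · have h : ((∑ a, ∑ b, P a b x y : ℝ) : ℂ) = 1 := by
      rw [Fin.sum_univ_two, Complex.ofReal_add, sum_right_eq_trace hF1 hP,
        sum_right_eq_trace hF1 hP, ← trace_add, ← add_mul, ← add_kronecker, hE1,
        one_kronecker_one, one_mul, htr]
    exact_mod_cast h
  · exact_mod_cast (sum_right_eq_trace hF1 hP a x y).trans (sum_right_eq_trace hF1 hP a x y').symm
  · exact_mod_cast (sum_left_eq_trace hE1 hP b x y).trans (sum_left_eq_trace hE1 hP b x' y).symm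

theorem Matrix.PosSemidef.one_sub_kronecker_one {X : Matrix m m ℂ} (hX : (1 - Xᴴ * X).PosSemidef) :
    (1 - (X ⊗ₖ (1 : Matrix n n ℂ))ᴴ * (X ⊗ₖ 1)).PosSemidef := by
  rw [conjTranspose_kronecker, conjTranspose_one, ← mul_kronecker_mul, one_mul, ← one_kronecker_one,
    ← sub_kronecker]
  exact hX.kronecker PosSemidef.one

theorem Matrix.PosSemidef.one_sub_one_kronecker {X : Matrix n n ℂ} (hX : (1 - Xᴴ * X).PosSemidef) :
    (1 - ((1 : Matrix m m ℂ) ⊗ₖ X)ᴴ * (1 ⊗ₖ X)).PosSemidef := by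
  rw [conjTranspose_kronecker, conjTranspose_one, ← mul_kronecker_mul, one_mul, ← one_kronecker_one,
    ← kronecker_sub]
  exact PosSemidef.one.kronecker hX

theorem sq_sub_le_two_sub_B5val_of_realisation (hρ : ρ.PosSemidef) (htr : ρ.trace = 1)
    (hE : ∀ x a, (E x a).PosSemidef) (hF : ∀ y b, (F y b).PosSemidef)
    (hE1 : ∀ x, E x 0 + E x 1 = 1) (hF1 : ∀ y, F y 0 + F y 1 = 1)
    (hP : ∀ a b x y, (P a b x y : ℂ) = ((E x a ⊗ₖ F y b) * ρ).trace) (a b x : Fin 2) :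
    (P a b x 1 - P a b x 0) ^ 2 ≤ 2 - B5val P := by
  -- A matrix `X` stands for the vector `Xψ`, `ψ` a purification of `ρ`: `⟪X, Y⟫ = tr(Xᴴ Y ρ)`.
  let := ρ.toMatrixSeminormedAddCommGroup hρ
  let := ρ.toMatrixInnerProductSpace hρ
  have hinner : ∀ M N, ⟪M ⊗ₖ (1 : Matrix n n ℂ), (1 : Matrix m m ℂ) ⊗ₖ N⟫_ℂ
      = ((Mᴴ ⊗ₖ N) * ρ).trace := fun M N => by
    change ((1 ⊗ₖ N) * ρ * (M ⊗ₖ 1)ᴴ).trace = _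
    rw [trace_mul_cycle, conjTranspose_kronecker, conjTranspose_one, ← mul_kronecker_mul,
      one_mul, mul_one]
  have hnorm : ∀ X : Matrix (m × n) (m × n) ℂ, (1 - Xᴴ * X).PosSemidef → ‖X‖ ≤ 1 :=
    fun X hX => by
      have h : ‖X‖ ^ 2 ≤ 1 := by
        rw [@norm_sq_eq_re_inner ℂ, ← Complex.one_re, ← htr]
        change (X * ρ * Xᴴ).trace.re ≤ _
        rw [trace_mul_cycle]
        exact hX.re_trace_conjTranspose_mul_self_mul_le hρ
      nlinarith [norm_nonneg X]
  set A := E 0 0 - E 0 1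
  set B := fun y => F y 0 - F y 1
  have hcorr : ∀ y, RCLike.re ⟪A ⊗ₖ 1, 1 ⊗ₖ B y⟫_ℂ = corr P 0 y := fun y => by
    rw [hinner, ((hE 0 0).1.sub (hE 0 1).1).eq, ← corr_eq_trace hP]; rfl
  have hΔ : 2 * ((P a b x 1 - P a b x 0 : ℝ) : ℂ)
      = (-1 : ℂ) ^ (b : ℕ) * ⟪E x a ⊗ₖ 1, 1 ⊗ₖ B 1 - 1 ⊗ₖ B 0⟫_ℂ := by
    rw [← kronecker_sub, hinner, (hE x a).1.eq, two_mul_sub_eq_trace hF1 hP]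
  have hEa : (1 - E x a).PosSemidef := by
    fin_cases a
    · simpa [← hE1 x] using hE x 1
    · simpa [← hE1 x] using hE x 0
  have key := norm_inner_sub_sq_le (𝕜 := ℂ)
    (hnorm _ ((hE x a).one_sub_conjTranspose_mul_self hEa).one_sub_kronecker_one)
    (hnorm _ ((hE 0 0).one_sub_conjTranspose_mul_self_sub (hE 0 1) (hE1 0)).one_sub_kronecker_one)
    (hnorm _ ((hF 0 0).one_sub_conjTranspose_mul_self_sub (hF 0 1) (hF1 0)).one_sub_one_kronecker)
    (hnorm _ ((hF 1 0).one_sub_conjTranspose_mul_self_sub (hF 1 1) (hF1 1)).one_sub_one_kronecker)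
  have hnormΔ : ‖⟪E x a ⊗ₖ 1, 1 ⊗ₖ B 1 - 1 ⊗ₖ B 0⟫_ℂ‖ = 2 * |P a b x 1 - P a b x 0| := by
    simpa [← Complex.ofReal_sub, Complex.norm_real] using (congrArg norm hΔ).symm
  rw [hcorr, hcorr, hnormΔ] at key
  rw [B5val]
  nlinarith [sq_abs (P a b x 1 - P a b x 0)]

end Realisation

theorem HasRealisation.mem_NS {d : ℕ} {P : Behaviour} (h : HasRealisation d P) : P ∈ NS := by
  obtain ⟨ρ, E, F, hρ, htr, hE, hF, hE1, hF1, hP⟩ := h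
  exact mem_NS_of_realisation hρ htr hE hF (fun x => (Fin.sum_univ_two _).symm.trans (hE1 x))
    (fun y => (Fin.sum_univ_two _).symm.trans (hF1 y)) hP

theorem HasRealisation.sq_sub_le_two_sub_B5val {d : ℕ} {P : Behaviour} (h : HasRealisation d P)
    (a b x : Fin 2) : (P a b x 1 - P a b x 0) ^ 2 ≤ 2 - B5val P := by
  obtain ⟨ρ, E, F, hρ, htr, hE, hF, hE1, hF1, hP⟩ := h
  exact sq_sub_le_two_sub_B5val_of_realisation hρ htr hE hF
    (fun x => (Fin.sum_univ_two _).symm.trans (hE1 x))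
    (fun y => (Fin.sum_univ_two _).symm.trans (hF1 y)) hP a b x

theorem isClosed_NS : IsClosed NS := by
  have hc : ∀ a b x y, Continuous fun P : Behaviour => P a b x y := by intros; fun_prop
  simp only [NS, Set.ofPred_and, Set.ofPred_forall]
  refine .inter ?_ (.inter ?_ (.inter ?_ ?_)) <;> repeat refine isClosed_iInter fun _ => ?_
  · exact isClosed_le continuous_const (hc ..)
  all_goals exact isClosed_eq (by fun_prop) (by fun_prop)

theorem continuous_B5val : Continuous B5val := by
  unfold B5val corr
  fun_prop

theorem Q_subset_NS : Q ⊆ NS :=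
  closure_minimal (by rintro P ⟨_, _, h⟩; exact h.mem_NS) isClosed_NS

theorem sq_sub_le_two_sub_B5val_of_mem_Q {P : Behaviour} (hP : P ∈ Q) (a b x : Fin 2) :
    (P a b x 1 - P a b x 0) ^ 2 ≤ 2 - B5val P :=
  closure_minimal (t := {P | (P a b x 1 - P a b x 0) ^ 2 ≤ 2 - B5val P})
    (by rintro P ⟨_, _, h⟩; exact h.sq_sub_le_two_sub_B5val a b x)
    (isClosed_le (by fun_prop) (continuous_const.sub continuous_B5val)) hP

theorem eq_of_mem_Q_of_B5val_eq_two {P : Behaviour} (hP : P ∈ Q) (h2 : B5val P = 2)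
    (a b x y : Fin 2) : P a b x y = P a b x 0 := by
  have h := sq_sub_le_two_sub_B5val_of_mem_Q hP a b x
  rw [h2, sub_self, sq_nonpos_iff, sub_eq_zero] at h
  fin_cases y
  exacts [rfl, h]

theorem corr_eq_of_mem_NS {P : Behaviour} (hP : P ∈ NS) (x y : Fin 2) :
    corr P x y = 1 - 2 * (P 0 1 x y + P 1 0 x y) := by
  have h := hP.2.1 x y
  simp only [corr, Fin.sum_univ_two] at h ⊢
  norm_num
  linarith

theorem B5val_le_two {P : Behaviour} (hP : P ∈ NS) : B5val P ≤ 2 := by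
  rw [B5val, corr_eq_of_mem_NS hP, corr_eq_of_mem_NS hP]
  linarith [hP.1 0 1 0 0, hP.1 1 0 0 0, hP.1 0 1 0 1, hP.1 1 0 0 1]

/-- The hidden variable is the pair (Bob's output, Alice's output on `x = 1`). -/
theorem mem_L_of_forall_eq {P : Behaviour} (hP : P ∈ NS) (hy : ∀ a b x y, P a b x y = P a b x 0)
    (h01 : P 0 1 0 0 = 0) (h10 : P 1 0 0 0 = 0) : P ∈ L := by
  have hB := hP.2.2.2
  have hn := hP.2.1 1 0
  simp only [Fin.sum_univ_two] at hB hn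
  refine mem_convexHull_of_exists_fintype (fun p : Fin 2 × Fin 2 => P p.2 p.1 1 0)
    (fun p => detBehaviour ![p.1, p.2] fun _ => p.1) (fun p => hP.1 _ _ _ _) ?_
    (fun p => ⟨_, _, rfl⟩) ?_
  · simp only [Fintype.sum_prod_type, Fin.sum_univ_two]
    linarith
  · funext a b x y
    simp only [Finset.sum_apply, Pi.smul_apply, smul_eq_mul, Fintype.sum_prod_type,
      Fin.sum_univ_two]
    fin_cases a <;> fin_cases b <;> fin_cases x <;> fin_cases y <;>
      simp [detBehaviour, hy _ _ _ 1] <;> linarith [hB 0 0 1 0, hB 1 0 1 0]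

theorem mem_L_of_mem_Q_of_B5val_eq_two {P : Behaviour} (hP : P ∈ Q) (h2 : B5val P = 2) :
    P ∈ L := by
  have hNS := Q_subset_NS hP
  have hy := eq_of_mem_Q_of_B5val_eq_two hP h2
  rw [B5val, corr_eq_of_mem_NS hNS, corr_eq_of_mem_NS hNS] at h2
  refine mem_L_of_forall_eq hNS hy ?_ ?_ <;>
    linarith [hNS.1 0 1 0 0, hNS.1 1 0 0 0, hNS.1 0 1 0 1, hNS.1 1 0 0 1]

theorem sum_diagonal_ite_eq {ι : Type*} [Fintype ι] [DecidableEq ι] (h : ι → Fin 2) :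
    ∑ a : Fin 2, diagonal (fun i => if h i = a then (1 : ℂ) else 0) = 1 := by
  ext i j
  simp [Matrix.sum_apply, diagonal_apply, one_apply]

theorem hasRealisation_sum_smul_detBehaviour {d : ℕ} (w : Fin d → ℝ) (f g : Fin d → Fin 2 → Fin 2)
    (hw0 : ∀ i, 0 ≤ w i) (hw1 : ∑ i, w i = 1) :
    HasRealisation d (∑ i, w i • detBehaviour (f i) (g i)) := by
  refine ⟨diagonal fun p => if p.1 = p.2 then (w p.1 : ℂ) else 0,
    fun x a => diagonal fun i => if f i x = a then 1 else 0,
    fun y b => diagonal fun j => if g j y = b then 1 else 0,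
    PosSemidef.diagonal fun p => by split_ifs <;> simp [hw0], ?_,
    fun x a => PosSemidef.diagonal fun i => by split_ifs <;> simp,
    fun y b => PosSemidef.diagonal fun j => by split_ifs <;> simp,
    fun x => sum_diagonal_ite_eq _, fun y => sum_diagonal_ite_eq _, fun a b x y => ?_⟩
  · simp [trace_diagonal, Fintype.sum_prod_type]
    exact_mod_cast hw1
  · simp [diagonal_kronecker_diagonal, trace_diagonal, Fintype.sum_prod_type, detBehaviour,
      Finset.sum_apply]
    refine Finset.sum_congr rfl fun i _ => ?_
    split_ifs <;> simp_all [eq_comm]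

theorem L_subset_Qfinite : L ⊆ Qfinite := by
  intro P hP
  obtain ⟨ι, _, w, z, hw0, hw1, hz, rfl⟩ := mem_convexHull_iff_exists_fintype.mp hP
  choose f g hfg using hz
  let e := (Fintype.equivFin ι).symm
  obtain ⟨i, -, -⟩ := Finset.exists_ne_zero_of_sum_ne_zero (hw1 ▸ one_ne_zero)
  refine ⟨Fintype.card ι, Fintype.card_pos_iff.2 ⟨i⟩, ?_⟩
  convert hasRealisation_sum_smul_detBehaviour (w ∘ e) (f ∘ e) (g ∘ e) (fun _ => hw0 _)
    ((e.sum_comp w).trans hw1) using 1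
  rw [← e.sum_comp]
  simp [hfg]

theorem L_subset_Q : L ⊆ Q := fun _ hP => subset_closure (L_subset_Qfinite hP)

theorem B5val_detBehaviour_zero : B5val (detBehaviour 0 0) = 2 := by
  norm_num [B5val, corr, detBehaviour, Fin.sum_univ_two]

theorem sSup_image_B5val {S : Set Behaviour} (hS : S ⊆ NS) (h0 : detBehaviour 0 0 ∈ S) :
    sSup (B5val '' S) = 2 :=
  IsGreatest.csSup_eq ⟨⟨_, h0, B5val_detBehaviour_zero⟩, by
    rintro _ ⟨P, hP, rfl⟩
    exact B5val_le_two (hS hP)⟩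

theorem detBehaviour_mem_L (f g : Fin 2 → Fin 2) : detBehaviour f g ∈ L :=
  subset_convexHull ℝ _ ⟨f, g, rfl⟩

theorem PR_apply (a b x y : Fin 2) :
    PR a b x y = (1 + (-1 : ℝ) ^ ((a : ℕ) + (b : ℕ)) * (-1 : ℝ) ^ ((x : ℕ) * (y : ℕ))) / 4 := by
  rw [PR, fromCorr]
  ring

theorem PR_mem_NS : PR ∈ NS := by
  refine ⟨fun a b x y => ?_, fun x y => ?_, fun a x y y' => ?_, fun b x x' y => ?_⟩ <;>
    simp only [Fin.sum_univ_two, PR_apply]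
  · rcases neg_one_pow_eq_or ℝ ((a : ℕ) + (b : ℕ)) with h | h <;>
      rcases neg_one_pow_eq_or ℝ ((x : ℕ) * (y : ℕ)) with h' | h' <;> rw [h, h'] <;> norm_num
  · norm_num; ring
  · fin_cases a <;> norm_num <;> ring
  · fin_cases b <;> norm_num <;> ring

theorem B5val_PR : B5val PR = 2 := by
  norm_num [B5val, corr, Fin.sum_univ_two, PR_apply]

theorem PR_not_mem_Q : PR ∉ Q := fun h => by
  have := eq_of_mem_Q_of_B5val_eq_two h B5val_PR 0 0 1 1
  norm_num [PR_apply] at this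

/-- **A quantum face with `F_L = F_Q ⊊ F_NS`.** Any quantum behaviour with
`⟨A₀B₀⟩ = ⟨A₀B₁⟩ = 1` has `⟨A₁B₀⟩ = ⟨A₁B₁⟩` and is local; the Bell function `B₅`
has `β_L = β_Q = β_NS = 2`, the local and quantum faces coincide, and the
no-signalling face is strictly larger, as witnessed by the PR box. -/
theorem b5_face :
    (∀ P ∈ Q, corr P 0 0 = 1 → corr P 0 1 = 1 → corr P 1 0 = corr P 1 1 ∧ P ∈ L) ∧
    sSup (B5val '' L) = 2 ∧ sSup (B5val '' Q) = 2 ∧ sSup (B5val '' NS) = 2 ∧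
    {P ∈ L | B5val P = sSup (B5val '' L)} = {P ∈ Q | B5val P = sSup (B5val '' Q)} ∧
    {P ∈ Q | B5val P = sSup (B5val '' Q)} ⊂ {P ∈ NS | B5val P = sSup (B5val '' NS)} ∧
    PR ∈ NS ∧ B5val PR = 2 ∧ PR ∉ Q := by
  have hdet : detBehaviour 0 0 ∈ L := detBehaviour_mem_L 0 0
  have hL := sSup_image_B5val (fun _ hP => Q_subset_NS (L_subset_Q hP)) hdet
  have hQ := sSup_image_B5val Q_subset_NS (L_subset_Q hdet)
  have hNS := sSup_image_B5val subset_rfl (Q_subset_NS (L_subset_Q hdet))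
  refine ⟨fun P hP h00 h01 => ?_, hL, hQ, hNS, ?_, ?_, PR_mem_NS, B5val_PR, PR_not_mem_Q⟩
  · have h2 : B5val P = 2 := by rw [B5val, h00, h01]; norm_num
    refine ⟨?_, mem_L_of_mem_Q_of_B5val_eq_two hP h2⟩
    simp only [corr, eq_of_mem_Q_of_B5val_eq_two hP h2 _ _ 1 1]
  · rw [hL, hQ]
    exact Set.ext fun P => ⟨fun ⟨h, h2⟩ => ⟨L_subset_Q h, h2⟩,
      fun ⟨h, h2⟩ => ⟨mem_L_of_mem_Q_of_B5val_eq_two h h2, h2⟩⟩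
  · rw [hQ, hNS]
    refine (Set.ssubset_iff_of_subset ?_).2 ⟨PR, ⟨PR_mem_NS, B5val_PR⟩, fun h => PR_not_mem_Q h.1⟩
    exact fun _ hP => ⟨Q_subset_NS hP.1, hP.2⟩
end

section
/- Let P_Hardy be the behaviour in the (2,2,2,2) Bell scenario determined by ⟨A₀⟩ = ⟨B₀⟩ = 5 − 2√5, ⟨A₁⟩ = ⟨B₁⟩ = √5 − 2, ⟨A₀B₀⟩ = 6√5 − 13, ⟨A₀B₁⟩ = ⟨A₁B₀⟩ = 3√5 − 6, ⟨A₁B₁⟩ = 2√5 − 5 (probabilities recovered via P(ab|xy) = (1 + (−1)^a⟨A_x⟩ + (−1)^b⟨B_y⟩ + (−1)^{a+b}⟨A_xB_y⟩)/4). Then for every Bell function B ∈ ℝ^16 such that B·P_Hardy = max_{P∈Q} B·P, there exists a local behaviour P_L ∈ L with B·P_L = max_{P∈Q} B·P; in particular β_L(B) = β_Q(B) for every such B, and since P_Hardy ∉ L, the Hardy point P_Hardy is not an exposed point of Q. -/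
open Matrix Kronecker ComplexOrder BigOperators

/-- The Hardy point, given by its marginals and correlators. -/
noncomputable def PHardy : Behaviour :=
  fromCorr ![5 - 2 * Real.sqrt 5, Real.sqrt 5 - 2]
    ![5 - 2 * Real.sqrt 5, Real.sqrt 5 - 2]
    ![![6 * Real.sqrt 5 - 13, 3 * Real.sqrt 5 - 6],
      ![3 * Real.sqrt 5 - 6, 2 * Real.sqrt 5 - 5]]


/-!
Rotating the state and the measurement directions of the qubit realisation of the Hardy point
gives a smooth curve in `Q` through `PHardy` whose velocity is a nonzero multiple of
`PHardy - D`, where `D` is the deterministic behaviour that always outputs `0`. A Bell functional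
that is maximal on `Q` at `PHardy` has zero derivative along this curve, so it takes the same
value at the local point `D`. Hence every face of `Q` exposed at `PHardy` also contains `D`, while
`PHardy` itself is not local since it violates the CHSH inequality (`10√5 - 20 > 2`).
-/

open Real

open scoped MatrixOrder in
lemma Matrix.PosSemidef.trace_mul_nonneg_s13 {𝕜 n : Type*} [RCLike 𝕜] [Fintype n] [DecidableEq n]
    {A B : Matrix n n 𝕜} (hA : A.PosSemidef) (hB : B.PosSemidef) : 0 ≤ (A * B).trace := by
  obtain ⟨X, rfl⟩ := CStarAlgebra.nonneg_iff_eq_star_mul_self.mp hA.nonneg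
  rw [star_eq_conjTranspose, Matrix.mul_assoc, trace_mul_comm]
  exact (hB.mul_mul_conjTranspose_same X).trace_nonneg

lemma Matrix.sum_kronecker_sum {R ι κ m n : Type*} [CommSemiring R] [Fintype ι] [Fintype κ]
    (E : ι → Matrix m m R) (F : κ → Matrix n n R) :
    (∑ i, E i) ⊗ₖ (∑ j, F j) = ∑ i, ∑ j, E i ⊗ₖ F j := by
  ext ⟨i, j⟩ ⟨k, l⟩
  simp only [kroneckerMap_apply, sum_apply, Finset.sum_mul_sum]

lemma nonneg_of_mem_Qfinite {P : Behaviour} (hP : P ∈ Qfinite) (a b x y : Fin 2) :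
    0 ≤ P a b x y := by
  obtain ⟨d, -, ρ, E, F, hρ, -, hE, hF, -, -, hP⟩ := hP
  exact_mod_cast hP a b x y ▸ ((hE x a).kronecker (hF y b)).trace_mul_nonneg_s13 hρ

lemma sum_eq_one_of_mem_Qfinite {P : Behaviour} (hP : P ∈ Qfinite) (x y : Fin 2) :
    ∑ a, ∑ b, P a b x y = 1 := by
  obtain ⟨d, -, ρ, E, F, -, hρ, -, -, hE, hF, hP⟩ := hP
  have h : ((∑ a, ∑ b, P a b x y : ℝ) : ℂ) = 1 := by
    push_cast
    simp only [hP, ← trace_sum, ← Finset.sum_mul, ← Matrix.sum_kronecker_sum, hE, hF,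
      one_kronecker_one, Matrix.one_mul, hρ]
  exact_mod_cast h

lemma Qfinite_subset_Icc : Qfinite ⊆ Set.Icc 0 1 := by
  intro P hP
  refine ⟨fun a b x y => nonneg_of_mem_Qfinite hP a b x y, fun a b x y => ?_⟩
  calc P a b x y ≤ ∑ p : Fin 2 × Fin 2, P p.1 p.2 x y :=
        Finset.single_le_sum (fun p _ => nonneg_of_mem_Qfinite hP p.1 p.2 x y)
          (Finset.mem_univ (a, b))
    _ = 1 := by rw [Fintype.sum_prod_type]; exact sum_eq_one_of_mem_Qfinite hP x y

lemma isCompact_Q : IsCompact Q :=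
  isCompact_Icc.of_isClosed_subset isClosed_closure
    (closure_minimal Qfinite_subset_Icc isClosed_Icc)

lemma continuous_bell (B : Behaviour) : Continuous (bell B) := by
  unfold bell; fun_prop

lemma bddAbove_bell_image_Q (B : Behaviour) : BddAbove (bell B '' Q) :=
  isCompact_Q.bddAbove_image (continuous_bell B).continuousOn

lemma isLinearMap_bell (B : Behaviour) : IsLinearMap ℝ (bell B) := by
  constructor <;> intros <;>
    simp only [bell, Fin.sum_univ_two, Pi.add_apply, Pi.smul_apply, smul_eq_mul] <;> ring

lemma isLinearMap_chsh : IsLinearMap ℝ chsh := by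
  constructor <;> intros <;>
    simp only [chsh, corr, Fin.sum_univ_two, Pi.add_apply, Pi.smul_apply, smul_eq_mul] <;> ring

lemma le_of_mem_L {φ : Behaviour → ℝ} (hφ : IsLinearMap ℝ φ) {c : ℝ}
    (hdet : ∀ f g, φ (detBehaviour f g) ≤ c) {P : Behaviour} (hP : P ∈ L) : φ P ≤ c :=
  convexHull_min (by rintro _ ⟨f, g, rfl⟩; exact hdet f g) (convex_halfSpace_le hφ c) hP

lemma corr_fromCorr (mA mB : Fin 2 → ℝ) (c : Fin 2 → Fin 2 → ℝ) (x y : Fin 2) :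
    corr (fromCorr mA mB c) x y = c x y := by
  simp only [corr, fromCorr, Fin.sum_univ_two]
  norm_num
  ring

/-- The behaviour of the state `cos (θ/2) |00⟩ + sin (θ/2) |11⟩` when outcome `a` of setting `x`
projects onto the real unit vector at angle `α x / 2 + a π / 2`, and likewise for Bob: in Bloch
terms, measurements in the `xz`-plane at angles `α x` and `β y`. -/
noncomputable def qubitBehaviour (θ : ℝ) (α β : Fin 2 → ℝ) : Behaviour :=
  fromCorr (fun x => cos (α x) * cos θ) (fun y => cos (β y) * cos θ)
    (fun x y => cos (α x) * cos (β y) + sin θ * (sin (α x) * sin (β y)))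

lemma sq_cos_mul_cos_mul_cos_add_sin_mul_sin_mul_sin (p q h : ℝ) :
    (cos p * cos q * cos h + sin p * sin q * sin h) ^ 2 =
      (1 + cos (2 * p) * cos (2 * h) + cos (2 * q) * cos (2 * h)
        + (cos (2 * p) * cos (2 * q) + sin (2 * h) * (sin (2 * p) * sin (2 * q)))) / 4 := by
  simp only [cos_two_mul', sin_two_mul]
  grind [sin_sq_add_cos_sq]

noncomputable def unitVec (φ : ℝ) : Fin 2 → ℝ := ![cos φ, sin φ]

noncomputable def outer {n : Type*} (v : n → ℝ) : Matrix n n ℂ :=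
  (vecMulVec v v).map (↑)

lemma posSemidef_outer {n : Type*} [Fintype n] (v : n → ℝ) : (outer v).PosSemidef := by
  convert posSemidef_vecMulVec_self_star (fun i => (v i : ℂ)) using 1
  ext i j
  simp [outer, vecMulVec_apply]

lemma outer_unitVec_add_outer_unitVec_add_pi_div_two (φ : ℝ) :
    outer (unitVec φ) + outer (unitVec (φ + π / 2)) = 1 := by
  ext i j
  fin_cases i <;> fin_cases j <;>
    simp [outer, unitVec, one_apply, cos_add_pi_div_two, sin_add_pi_div_two, ← sq, mul_comm]

noncomputable def entangledVec (h : ℝ) : Fin 2 × Fin 2 → ℝ :=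
  fun p => if p.1 = p.2 then unitVec h p.1 else 0

lemma trace_outer_entangledVec (h : ℝ) : (outer (entangledVec h)).trace = 1 := by
  simp [Matrix.trace, outer, vecMulVec_apply, Fintype.sum_prod_type, entangledVec, unitVec, ← sq]

lemma trace_kronecker_mul_outer_entangledVec (A B h : ℝ) :
    ((outer (unitVec A) ⊗ₖ outer (unitVec B)) * outer (entangledVec h)).trace
      = (((cos A * cos B * cos h + sin A * sin B * sin h) ^ 2 : ℝ) : ℂ) := by
  simp only [Matrix.trace, diag_apply, Matrix.mul_apply, kroneckerMap_apply, outer, map_apply,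
    vecMulVec_apply, Fintype.sum_prod_type, Fin.sum_univ_two, entangledVec, unitVec, Fin.isValue,
    ↓reduceIte, cons_val_zero, cons_val_one, cons_val_fin_one, Fin.zero_ne_one, one_ne_zero]
  push_cast
  ring

lemma qubitBehaviour_mem_Qfinite (θ : ℝ) (α β : Fin 2 → ℝ) : qubitBehaviour θ α β ∈ Qfinite := by
  refine ⟨2, two_pos, outer (entangledVec (θ / 2)),
    fun x a => outer (unitVec (α x / 2 + (a : ℕ) * (π / 2))),
    fun y b => outer (unitVec (β y / 2 + (b : ℕ) * (π / 2))),
    posSemidef_outer _, trace_outer_entangledVec _,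
    fun _ _ => posSemidef_outer _, fun _ _ => posSemidef_outer _,
    fun x => ?_, fun y => ?_, fun a b x y => ?_⟩
  · simpa [Fin.sum_univ_two] using outer_unitVec_add_outer_unitVec_add_pi_div_two (α x / 2)
  · simpa [Fin.sum_univ_two] using outer_unitVec_add_outer_unitVec_add_pi_div_two (β y / 2)
  · rw [trace_kronecker_mul_outer_entangledVec, sq_cos_mul_cos_mul_cos_add_sin_mul_sin_mul_sin]
    have hA : 2 * (α x / 2 + (a : ℕ) * (π / 2)) = α x + (a : ℕ) * π := by ring
    have hB : 2 * (β y / 2 + (b : ℕ) * (π / 2)) = β y + (b : ℕ) * π := by ring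
    simp only [hA, hB, mul_div_cancel₀ θ two_ne_zero, cos_add_nat_mul_pi, sin_add_nat_mul_pi,
      qubitBehaviour, fromCorr]
    push_cast
    ring

lemma detBehaviour_eq_qubitBehaviour (f g : Fin 2 → Fin 2) :
    detBehaviour f g = qubitBehaviour 0 (fun x => (f x : ℕ) * π) (fun y => (g y : ℕ) * π) := by
  ext a b x y
  simp only [detBehaviour, qubitBehaviour, fromCorr, cos_nat_mul_pi, sin_zero, cos_zero]
  generalize f x = i; generalize g y = j
  fin_cases a <;> fin_cases b <;> fin_cases i <;> fin_cases j <;> norm_num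

lemma detBehaviour_mem_Qfinite (f g : Fin 2 → Fin 2) : detBehaviour f g ∈ Qfinite :=
  detBehaviour_eq_qubitBehaviour f g ▸ qubitBehaviour_mem_Qfinite _ _ _

lemma detBehaviour_zero_eq_fromCorr :
    detBehaviour 0 0 = fromCorr (fun _ => 1) (fun _ => 1) (fun _ _ => 1) := by
  simp [detBehaviour_eq_qubitBehaviour, qubitBehaviour]

lemma bell_le_of_mem_L (B : Behaviour) {P : Behaviour} (hP : P ∈ L) :
    bell B P ≤ sSup (bell B '' Q) :=
  le_of_mem_L (isLinearMap_bell B)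
    (fun f g => le_csSup (bddAbove_bell_image_Q B)
      ⟨_, subset_closure (detBehaviour_mem_Qfinite f g), rfl⟩) hP

lemma chsh_expression_le_two {a₀ a₁ b₀ b₁ : ℝ} (ha₀ : |a₀| ≤ 1) (ha₁ : |a₁| ≤ 1)
    (hb₀ : |b₀| ≤ 1) (hb₁ : |b₁| ≤ 1) : a₀ * b₀ + a₀ * b₁ + a₁ * b₀ - a₁ * b₁ ≤ 2 := by
  have hb : |b₀ + b₁| + |b₀ - b₁| ≤ 2 := by
    rw [abs_le] at hb₀ hb₁
    rcases abs_cases (b₀ + b₁) with ⟨h, -⟩ | ⟨h, -⟩ <;>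
      rcases abs_cases (b₀ - b₁) with ⟨h', -⟩ | ⟨h', -⟩ <;> linarith
  have h₀ : a₀ * (b₀ + b₁) ≤ |b₀ + b₁| :=
    (le_abs_self _).trans (abs_mul a₀ _ ▸ mul_le_of_le_one_left (abs_nonneg _) ha₀)
  have h₁ : a₁ * (b₀ - b₁) ≤ |b₀ - b₁| :=
    (le_abs_self _).trans (abs_mul a₁ _ ▸ mul_le_of_le_one_left (abs_nonneg _) ha₁)
  linarith

lemma chsh_detBehaviour_le_two (f g : Fin 2 → Fin 2) : chsh (detBehaviour f g) ≤ 2 := by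
  simp only [detBehaviour_eq_qubitBehaviour, chsh, qubitBehaviour, corr_fromCorr, sin_zero,
    zero_mul, add_zero]
  exact chsh_expression_le_two (abs_cos_le_one _) (abs_cos_le_one _) (abs_cos_le_one _)
    (abs_cos_le_one _)

lemma chsh_le_two_of_mem_L {P : Behaviour} (hP : P ∈ L) : chsh P ≤ 2 :=
  le_of_mem_L isLinearMap_chsh chsh_detBehaviour_le_two hP

lemma hasDerivAt_fromCorr {mA mB : ℝ → Fin 2 → ℝ} {c : ℝ → Fin 2 → Fin 2 → ℝ}
    {dA dB : Fin 2 → ℝ} {dc : Fin 2 → Fin 2 → ℝ} {t₀ : ℝ}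
    (hA : ∀ x, HasDerivAt (fun t => mA t x) (dA x) t₀)
    (hB : ∀ y, HasDerivAt (fun t => mB t y) (dB y) t₀)
    (hc : ∀ x y, HasDerivAt (fun t => c t x y) (dc x y) t₀) (a b x y : Fin 2) :
    HasDerivAt (fun t => fromCorr (mA t) (mB t) (c t) a b x y)
      (((-1) ^ (a : ℕ) * dA x + (-1) ^ (b : ℕ) * dB y + (-1) ^ ((a : ℕ) + b) * dc x y) / 4) t₀ :=
  (((((hA x).const_mul _).const_add 1).add ((hB y).const_mul _)).add
    ((hc x y).const_mul _)).div_const 4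

lemma hasDerivAt_cos_mul_cos (α k θ κ : ℝ) :
    HasDerivAt (fun t => cos (α + k * t) * cos (θ + κ * t))
      (-(k * sin α * cos θ + κ * cos α * sin θ)) 0 := by
  have hα := (hasDerivAt_id' (x := (0 : ℝ)).const_mul k).const_add α
  have hθ := (hasDerivAt_id' (x := (0 : ℝ)).const_mul κ).const_add θ
  refine (hα.cos.fun_mul hθ.cos).congr_deriv ?_
  simp only [mul_zero, add_zero, mul_one]
  ring

lemma hasDerivAt_cos_mul_cos_add_sin_mul_sin_mul_sin (α k β l θ κ : ℝ) :
    HasDerivAt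
      (fun t => cos (α + k * t) * cos (β + l * t)
        + sin (θ + κ * t) * (sin (α + k * t) * sin (β + l * t)))
      (-(k * sin α * cos β) - l * cos α * sin β + κ * cos θ * (sin α * sin β)
        + sin θ * (k * cos α * sin β + l * sin α * cos β)) 0 := by
  have hα := (hasDerivAt_id' (x := (0 : ℝ)).const_mul k).const_add α
  have hβ := (hasDerivAt_id' (x := (0 : ℝ)).const_mul l).const_add β
  have hθ := (hasDerivAt_id' (x := (0 : ℝ)).const_mul κ).const_add θ
  refine ((hα.cos.fun_mul hβ.cos).add (hθ.sin.fun_mul (hα.sin.fun_mul hβ.sin))).congr_deriv ?_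
  simp only [mul_zero, add_zero, mul_one]
  ring

lemma bell_eq_zero_of_isMaxOn {B P v : Behaviour} {c : ℝ → Behaviour}
    (hmax : IsMaxOn (bell B) Q P) (hc : ∀ t, c t ∈ Q) (h0 : c 0 = P)
    (hv : ∀ a b x y, HasDerivAt (fun t => c t a b x y) (v a b x y) 0) : bell B v = 0 := by
  have hd : HasDerivAt (fun t => bell B (c t)) (bell B v) 0 :=
    .fun_sum fun a _ => .fun_sum fun b _ => .fun_sum fun x _ => .fun_sum fun y _ =>
      (hv a b x y).const_mul _
  exact IsLocalMax.hasDerivAt_eq_zero (.of_forall fun t => h0 ▸ hmax (hc t)) hd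

lemma isMaxOn_of_bell_eq_sSup {B P : Behaviour} (h : bell B P = sSup (bell B '' Q)) :
    IsMaxOn (bell B) Q P :=
  fun P' hP' => h ▸ le_csSup (bddAbove_bell_image_Q B) ⟨P', hP', rfl⟩

lemma exists_cos_sin_eq {c s : ℝ} (h : c ^ 2 + s ^ 2 = 1) : ∃ φ, cos φ = c ∧ sin φ = s := by
  have hz : ‖(⟨c, s⟩ : ℂ)‖ = 1 := by
    rw [Complex.norm_def, Complex.normSq_mk, ← sq, ← sq, h, sqrt_one]
  refine ⟨Complex.arg ⟨c, s⟩, ?_, ?_⟩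
  · simpa [hz] using Complex.norm_mul_cos_arg (⟨c, s⟩ : ℂ)
  · simpa [hz] using Complex.norm_mul_sin_arg (⟨c, s⟩ : ℂ)

/-! The qubit realisation of `PHardy`: the state has Bloch angle with cosine `cosState` and sine
`√5 - 3`, and observable `x` of either party has Bloch angle with cosine `cosObs x` and sine
`sinObs x`. Turning the state at speed `2` and observable `x` at speed `speedObs x` moves the
behaviour with velocity `rate • (PHardy - detBehaviour 0 0)`: these speeds are the solution of
that linear system. -/
namespace Hardy

noncomputable def marginals : Fin 2 → ℝ := ![5 - 2 * √5, √5 - 2]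

noncomputable def correlators : Fin 2 → Fin 2 → ℝ :=
  ![![6 * √5 - 13, 3 * √5 - 6], ![3 * √5 - 6, 2 * √5 - 5]]

lemma PHardy_eq_fromCorr : PHardy = fromCorr marginals marginals correlators := rfl

noncomputable def cosState : ℝ := √(6 * √5 - 13)

noncomputable def sinObs₁ : ℝ := √((14 - 2 * √5) / 11)

noncomputable def cosObs : Fin 2 → ℝ := ![(5 - 2 * √5) / cosState, (√5 - 2) / cosState]

noncomputable def sinObs : Fin 2 → ℝ := ![(12 - 8 * √5) / (11 * sinObs₁), sinObs₁]

noncomputable def speedObs : Fin 2 → ℝ := ![sinObs₁, -(sinObs₁ * (5 + √5) / 2)]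

noncomputable def rate : ℝ := (9 - 5 * √5) / cosState

lemma sqrt_five_sq : √5 ^ 2 = 5 := sq_sqrt (by norm_num)

lemma eleven_fifths_lt_sqrt_five : 11 / 5 < √5 := by
  rw [lt_sqrt (by norm_num)]; norm_num

lemma sqrt_five_lt_three : √5 < 3 := by
  rw [sqrt_lt' (by norm_num)]; norm_num

lemma cosState_sq : cosState ^ 2 = 6 * √5 - 13 :=
  sq_sqrt (by linarith [eleven_fifths_lt_sqrt_five])

lemma sinObs₁_sq : sinObs₁ ^ 2 = (14 - 2 * √5) / 11 :=
  sq_sqrt (by linarith [sqrt_five_lt_three])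

lemma cosState_ne_zero : cosState ≠ 0 :=
  (sqrt_pos.mpr (by linarith [eleven_fifths_lt_sqrt_five])).ne'

lemma sinObs₁_ne_zero : sinObs₁ ≠ 0 :=
  (sqrt_pos.mpr (by linarith [sqrt_five_lt_three])).ne'

lemma rate_ne_zero : rate ≠ 0 :=
  div_ne_zero (by linarith [eleven_fifths_lt_sqrt_five]) cosState_ne_zero

lemma cosState_sq_add_sq : cosState ^ 2 + (√5 - 3) ^ 2 = 1 := by
  grind [cosState_sq, sqrt_five_sq]

lemma cosObs_sq_add_sinObs_sq (x : Fin 2) : cosObs x ^ 2 + sinObs x ^ 2 = 1 := by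
  have := cosState_ne_zero; have := sinObs₁_ne_zero
  fin_cases x <;>
    simp only [cosObs, sinObs, Fin.zero_eta, Fin.mk_one, Fin.isValue, cons_val_zero, cons_val_one,
      cons_val_fin_one] <;>
    grind [cosState_sq, sinObs₁_sq, sqrt_five_sq]

lemma cosObs_mul_cosState (x : Fin 2) : cosObs x * cosState = marginals x := by
  have := cosState_ne_zero
  fin_cases x <;>
    simp only [cosObs, marginals, Fin.zero_eta, Fin.mk_one, Fin.isValue, cons_val_zero, cons_val_one,
      cons_val_fin_one] <;>
    field_simp

lemma cosObs_mul_cosObs_add (x y : Fin 2) :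
    cosObs x * cosObs y + (√5 - 3) * (sinObs x * sinObs y) = correlators x y := by
  have := cosState_ne_zero; have := sinObs₁_ne_zero
  fin_cases x <;> fin_cases y <;>
    simp only [cosObs, sinObs, correlators, cons_val', Fin.zero_eta, Fin.mk_one, Fin.isValue, cons_val_zero, cons_val_one,
      cons_val_fin_one] <;>
    grind [cosState_sq, sinObs₁_sq, sqrt_five_sq]

lemma marginal_velocity (x : Fin 2) :
    -(speedObs x * sinObs x * cosState + 2 * cosObs x * (√5 - 3)) = rate * (marginals x - 1) := by
  have := cosState_ne_zero; have := sinObs₁_ne_zero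
  fin_cases x <;>
    simp only [cosObs, sinObs, speedObs, rate, marginals, Fin.zero_eta, Fin.mk_one, Fin.isValue, cons_val_zero, cons_val_one,
      cons_val_fin_one] <;>
    grind [cosState_sq, sinObs₁_sq, sqrt_five_sq]

lemma correlator_velocity (x y : Fin 2) :
    -(speedObs x * sinObs x * cosObs y) - speedObs y * cosObs x * sinObs y
      + 2 * cosState * (sinObs x * sinObs y)
      + (√5 - 3) * (speedObs x * cosObs x * sinObs y + speedObs y * sinObs x * cosObs y) =
      rate * (correlators x y - 1) := by
  have := cosState_ne_zero; have := sinObs₁_ne_zero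
  fin_cases x <;> fin_cases y <;>
    simp only [cosObs, sinObs, speedObs, rate, correlators, cons_val', Fin.zero_eta, Fin.mk_one, Fin.isValue, cons_val_zero, cons_val_one,
      cons_val_fin_one] <;>
    grind [cosState_sq, sinObs₁_sq, sqrt_five_sq]

theorem exists_curve_through_PHardy :
    ∃ c : ℝ → Behaviour, (∀ t, c t ∈ Qfinite) ∧ c 0 = PHardy ∧
      ∀ a b x y, HasDerivAt (fun t => c t a b x y)
        ((rate • (PHardy - detBehaviour 0 0)) a b x y) 0 := by
  obtain ⟨θ, hθc, hθs⟩ := exists_cos_sin_eq cosState_sq_add_sq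
  choose α hαc hαs using fun x => exists_cos_sin_eq (cosObs_sq_add_sinObs_sq x)
  refine ⟨fun t => qubitBehaviour (θ + 2 * t) (fun x => α x + speedObs x * t)
    (fun y => α y + speedObs y * t), fun t => qubitBehaviour_mem_Qfinite _ _ _, ?_, ?_⟩
  · simp only [mul_zero, add_zero, qubitBehaviour, hθc, hθs, hαc, hαs, cosObs_mul_cosState,
      cosObs_mul_cosObs_add]
    rfl
  · intro a b x y
    refine (hasDerivAt_fromCorr (fun x => hasDerivAt_cos_mul_cos _ _ _ _)
      (fun y => hasDerivAt_cos_mul_cos _ _ _ _) (fun x y => hasDerivAt_cos_mul_cos_add_sin_mul_sin_mul_sin _ _ _ _ _ _)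
      a b x y).congr_deriv ?_
    simp only [hθc, hθs, hαc, hαs, marginal_velocity, correlator_velocity, Pi.smul_apply,
      Pi.sub_apply, smul_eq_mul, PHardy_eq_fromCorr, detBehaviour_zero_eq_fromCorr, fromCorr]
    ring

end Hardy

lemma chsh_PHardy : chsh PHardy = 10 * √5 - 20 := by
  simp only [chsh, Hardy.PHardy_eq_fromCorr, corr_fromCorr, Hardy.correlators]
  norm_num
  ring

lemma PHardy_not_mem_L : PHardy ∉ L := fun h => by
  linarith [chsh_le_two_of_mem_L h, chsh_PHardy, Hardy.eleven_fifths_lt_sqrt_five]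

lemma bell_detBehaviour_zero_eq {B : Behaviour} (hmax : IsMaxOn (bell B) Q PHardy) :
    bell B (detBehaviour 0 0) = bell B PHardy := by
  obtain ⟨c, hcQ, hc0, hcv⟩ := Hardy.exists_curve_through_PHardy
  have h := bell_eq_zero_of_isMaxOn hmax (fun t => subset_closure (hcQ t)) hc0 hcv
  have hlin : bell B (Hardy.rate • (PHardy - detBehaviour 0 0)) =
      Hardy.rate * (bell B PHardy - bell B (detBehaviour 0 0)) := by
    simp only [← IsLinearMap.mk'_apply (isLinearMap_bell B), map_smul, map_sub, smul_eq_mul]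
  rw [hlin, mul_eq_zero, sub_eq_zero] at h
  exact (h.resolve_left Hardy.rate_ne_zero).symm

lemma sSup_bell_image_L_eq {B P : Behaviour} (hP : P ∈ L) (h : bell B P = sSup (bell B '' Q)) :
    sSup (bell B '' L) = sSup (bell B '' Q) := by
  have hgreatest : IsGreatest (bell B '' L) (bell B P) :=
    ⟨⟨P, hP, rfl⟩, by rintro _ ⟨P', hP', rfl⟩; exact h ▸ bell_le_of_mem_L B hP'⟩
  exact hgreatest.csSup_eq.trans h

/-- **The Hardy point is not exposed.** Every Bell function maximised (over `Q`)
by the Hardy point is also maximised by some local behaviour, so `β_L = β_Q` for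
every such function; since the Hardy point is not local, it is not an exposed
point of the quantum set. -/
theorem hardy_not_exposed :
    (∀ B : Behaviour, bell B PHardy = sSup (bell B '' Q) →
      ∃ PL ∈ L, bell B PL = sSup (bell B '' Q)) ∧
    (∀ B : Behaviour, bell B PHardy = sSup (bell B '' Q) →
      sSup (bell B '' L) = sSup (bell B '' Q)) ∧
    PHardy ∉ L ∧
    ¬ ∃ B : Behaviour, {P ∈ Q | bell B P = sSup (bell B '' Q)} = {PHardy} := by
  have hDL : detBehaviour 0 0 ∈ L := subset_convexHull ℝ _ ⟨0, 0, rfl⟩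
  have hD : ∀ B, bell B PHardy = sSup (bell B '' Q) →
      bell B (detBehaviour 0 0) = sSup (bell B '' Q) := fun B hB =>
    (bell_detBehaviour_zero_eq (isMaxOn_of_bell_eq_sSup hB)).trans hB
  refine ⟨fun B hB => ⟨_, hDL, hD B hB⟩, fun B hB => sSup_bell_image_L_eq hDL (hD B hB),
    PHardy_not_mem_L, ?_⟩
  rintro ⟨B, hface⟩
  have hH : PHardy ∈ {P ∈ Q | bell B P = sSup (bell B '' Q)} := hface ▸ rfl
  have hDface : detBehaviour 0 0 ∈ {P ∈ Q | bell B P = sSup (bell B '' Q)} :=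
    ⟨subset_closure (detBehaviour_mem_Qfinite 0 0), hD B hH.2⟩
  rw [hface] at hDface
  exact PHardy_not_mem_L (hDface ▸ hDL)
end
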